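/- arXiv:2006.10076 — 2 statements merged into one kernel-verified Lean document; each statement's English description precedes it below -/
import Mathlib

section
/- Let P ⊂ ℝ^d be a rational d-polytope and let T be a triangulation of P with denominator q. Then the Ehrhart series of P satisfies Ehr(P;z) = (Σ_{Ω ∈ T} B(Ω;z) · h_T(Ω;z^q)) / (1 − z^q)^{d+1}, where the sum is over all faces Ω of T including the empty face. -/
open scoped BigOperators Pointwise

namespace RationalEhrhart

/-- A point of `ℝ^m` is a lattice point if all its coordinates are integers. -/
def IsLatticePt {m : ℕ} (v : Fin m → ℝ) : Prop := ∀ i, ∃ n : ℤ, v i = (n : ℝ)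

/-- Lattice points of `ℝ^d × ℝ = ℝ^{d+1}`. -/
def IsLatticePtC {d : ℕ} (p : (Fin d → ℝ) × ℝ) : Prop :=
  (∀ i, ∃ n : ℤ, p.1 i = (n : ℝ)) ∧ ∃ n : ℤ, p.2 = (n : ℝ)

/-- `P` is a polytope: the convex hull of finitely many points. -/
def IsPolytope {d : ℕ} (P : Set (Fin d → ℝ)) : Prop :=
  ∃ V : Finset (Fin d → ℝ), P = convexHull ℝ (V : Set (Fin d → ℝ))

/-- `P` is a rational polytope: the convex hull of finitely many rational points. -/
def IsRationalPolytope {d : ℕ} (P : Set (Fin d → ℝ)) : Prop :=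
  ∃ V : Finset (Fin d → ℝ), (∀ v ∈ V, ∀ i, ∃ r : ℚ, v i = (r : ℝ)) ∧
    P = convexHull ℝ (V : Set (Fin d → ℝ))

/-- `P` is a lattice polytope: the convex hull of finitely many lattice points. -/
def IsLatticePolytope {d : ℕ} (P : Set (Fin d → ℝ)) : Prop :=
  ∃ V : Finset (Fin d → ℝ), (∀ v ∈ V, IsLatticePt v) ∧
    P = convexHull ℝ (V : Set (Fin d → ℝ))

/-- `q` clears all coordinate denominators of every point of `S`. -/
def ClearsDenoms {d : ℕ} (q : ℕ) (S : Set (Fin d → ℝ)) : Prop :=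
  ∀ v ∈ S, ∀ i, ∃ n : ℤ, (q : ℝ) * v i = (n : ℝ)

/-- `q` is the denominator (the lcm of all coordinate denominators) of the points of `S`. -/
def IsDenominator {d : ℕ} (q : ℕ) (S : Set (Fin d → ℝ)) : Prop :=
  0 < q ∧ ClearsDenoms q S ∧ ∀ q' : ℕ, 0 < q' → ClearsDenoms q' S → q ∣ q'

/-- The number of lattice points in the `t`-th dilate of `P`. -/
noncomputable def latticeCount {d : ℕ} (P : Set (Fin d → ℝ)) (t : ℕ) : ℕ :=
  Set.ncard {v : Fin d → ℝ | v ∈ (t : ℝ) • P ∧ IsLatticePt v}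

/-- The Ehrhart series `Ehr(P;z) = ∑_{t ≥ 0} #(tP ∩ ℤ^d) z^t` of `P`. -/
noncomputable def ehr {d : ℕ} (P : Set (Fin d → ℝ)) : PowerSeries ℤ :=
  PowerSeries.mk fun t => (latticeCount P t : ℤ)

/-- The integral generator `(q·v, q)` at height `q` of the ray through `(v,1)`. -/
def rayGen {d : ℕ} (q : ℕ) (v : Fin d → ℝ) : (Fin d → ℝ) × ℝ := ((q : ℝ) • v, (q : ℝ))

/-- The open parallelepiped (box) spanned by the height-`q` ray generators of the face
with vertex set `Ω`. -/
def faceBox {d : ℕ} (q : ℕ) (Ω : Finset (Fin d → ℝ)) : Set ((Fin d → ℝ) × ℝ) :=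
  {p | ∃ lam : (Fin d → ℝ) → ℝ, (∀ v ∈ Ω, 0 < lam v ∧ lam v < 1) ∧
        p = ∑ v ∈ Ω, lam v • rayGen q v}

/-- The open parallelepiped spanned by the height-`q` ray generators of the face with
vertex set `Ω` together with one extra generator `w` (the interior direction `(a,ℓ)`). -/
def faceBoxA {d : ℕ} (q : ℕ) (w : (Fin d → ℝ) × ℝ) (Ω : Finset (Fin d → ℝ)) :
    Set ((Fin d → ℝ) × ℝ) :=
  {p | ∃ (lam : (Fin d → ℝ) → ℝ) (c : ℝ), (∀ v ∈ Ω, 0 < lam v ∧ lam v < 1) ∧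
        0 < c ∧ c < 1 ∧ p = (∑ v ∈ Ω, lam v • rayGen q v) + c • w}

/-- The generating function `∑_{p ∈ S ∩ ℤ^{d+1}} z^{u(p)}` of the last coordinates of the
lattice points of `S ⊆ ℝ^{d+1}`, as a polynomial (for `S` with nonnegative heights). -/
noncomputable def genPoly {d : ℕ} (S : Set ((Fin d → ℝ) × ℝ)) : Polynomial ℤ :=
  ∑ᶠ p ∈ {p | p ∈ S ∧ IsLatticePtC p}, Polynomial.X ^ (⌊p.2⌋.toNat)

/-- The generating function `∑_{p ∈ S ∩ ℤ^{d+1}} z^{u(p)}` as a Laurent polynomial. -/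
noncomputable def genLaurent {d : ℕ} (S : Set ((Fin d → ℝ) × ℝ)) : LaurentPolynomial ℤ :=
  ∑ᶠ p ∈ {p | p ∈ S ∧ IsLatticePtC p}, LaurentPolynomial.T ⌊p.2⌋

/-- The generating function `∑_{p ∈ S ∩ ℤ^{d+1}} z^{-u(p)}`, i.e. the substitution
`z ↦ 1/z` applied to `genLaurent S`. -/
noncomputable def genLaurentInv {d : ℕ} (S : Set ((Fin d → ℝ) × ℝ)) : LaurentPolynomial ℤ :=
  ∑ᶠ p ∈ {p | p ∈ S ∧ IsLatticePtC p}, LaurentPolynomial.T (-⌊p.2⌋)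

/-- The box polynomial `B(Ω;z)` of a face `Ω` (with respect to height `q`);
note `boxPoly q ∅ = 1`. -/
noncomputable def boxPoly {d : ℕ} (q : ℕ) (Ω : Finset (Fin d → ℝ)) : Polynomial ℤ :=
  genPoly (faceBox q Ω)

/-- The box polynomial `B(Ω';z)` of a face `Ω` augmented by the generator `w = (a,ℓ)`. -/
noncomputable def boxPolyA {d : ℕ} (q : ℕ) (w : (Fin d → ℝ) × ℝ) (Ω : Finset (Fin d → ℝ)) :
    Polynomial ℤ :=
  genPoly (faceBoxA q w Ω)

/-- The `h`-polynomial of the face `Ω` in the simplicial complex with face set `K`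
(which should contain the empty face), triangulating a polytope of dimension `D`:
`h(Ω;z) = (1−z)^{D−dim Ω} ∑_{Ω ⊆ Φ ∈ K} (z/(1−z))^{dim Φ − dim Ω}
        = ∑_{Ω ⊆ Φ ∈ K} z^{#Φ − #Ω} (1−z)^{D+1−#Φ}`, where `dim Φ = #Φ − 1`. -/
noncomputable def hPoly {d : ℕ} (D : ℕ) (K : Set (Finset (Fin d → ℝ)))
    (Ω : Finset (Fin d → ℝ)) : Polynomial ℤ :=
  ∑ᶠ Φ ∈ {Φ | Φ ∈ K ∧ Ω ⊆ Φ},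
    Polynomial.X ^ (Φ.card - Ω.card) * (1 - Polynomial.X) ^ (D + 1 - Φ.card)

/-- The face set of a simplicial complex, together with the empty face. -/
def facesE {d : ℕ} (K : Geometry.SimplicialComplex ℝ (Fin d → ℝ)) :
    Set (Finset (Fin d → ℝ)) :=
  insert ∅ K.faces

/-- Extended coefficient function of a polynomial, defined for all integer indices. -/
noncomputable def coeffZ (p : Polynomial ℤ) (m : ℤ) : ℤ :=
  if 0 ≤ m then p.coeff m.toNat else 0

/-- `p(z) = z^N · p(1/z)` as an identity of Laurent polynomials, expressed through
coefficients: the coefficient of `z^m` on the left is `coeffZ p m`, on the right it is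
`coeffZ p (N−m)`. -/
def IsPalin (N : ℤ) (p : Polynomial ℤ) : Prop :=
  ∀ m : ℤ, coeffZ p m = coeffZ p (N - m)

/-- The polar dual polytope `P* = {y : ⟨y,x⟩ ≤ 1 for all x ∈ P}`. -/
def polarDual {d : ℕ} (P : Set (Fin d → ℝ)) : Set (Fin d → ℝ) :=
  {y | ∀ x ∈ P, ∑ i, y i * x i ≤ 1}

end RationalEhrhart

/-!
Lift `P` to height one in `ℝ^d × ℝ`: the lattice points of `tP` are the lattice points at height
`t` of the cone over `P`, so `Ehr(P;z)` is the height generating series of that cone. The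
triangulation cuts the cone into the disjoint open cones over its faces `Φ` (the empty face
contributing the origin). Writing the lattice points of the open cone over `Φ` in the basis of
the generators `(q v, q)`, `v ∈ Φ`, and splitting off integer parts shows that they are the
translates of the half-open parallelepiped `{∑ μ_v (q v, q) : 0 < μ_v ≤ 1}` by `ℕ`-combinations of
the generators, whence a factor `(1 - z^q)^{-#Φ}`. Recording the set `Ω` of coordinates `μ_v < 1`
decomposes the parallelepiped into translates of the open boxes of the faces `Ω ⊆ Φ`, with height
series `∑_{Ω ⊆ Φ} B(Ω;z) z^{q(#Φ - #Ω)}`. Exchanging the sums over `Ω ⊆ Φ` produces the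
`h`-polynomials.
-/

open Bornology

theorem isBounded_sum_smul {ι E : Type*} [SeminormedAddCommGroup E] [NormedSpace ℝ E]
    (s : Finset ι) (g : ι → E) (c : ℝ) :
    IsBounded {p | ∃ μ : ι → ℝ, (∀ i ∈ s, μ i ∈ Set.Icc 0 c) ∧ p = ∑ i ∈ s, μ i • g i} := by
  refine (Metric.isBounded_closedBall (x := 0) (r := ∑ i ∈ s, c * ‖g i‖)).subset ?_
  rintro p ⟨μ, hμ, rfl⟩
  rw [mem_closedBall_zero_iff]
  refine (norm_sum_le _ _).trans (Finset.sum_le_sum fun i hi => ?_)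
  rw [norm_smul, Real.norm_of_nonneg (hμ i hi).1]
  exact mul_le_mul_of_nonneg_right (hμ i hi).2 (norm_nonneg _)

theorem Finset.sum_update_smul {ι k E : Type*} [DecidableEq ι] [Ring k] [AddCommGroup E]
    [Module k E] {s : Finset ι} {i : ι} (hi : i ∈ s) (μ : ι → k) (c : k) (g : ι → E) :
    ∑ j ∈ s, Function.update μ i c j • g j = ∑ j ∈ s, μ j • g j + (c - μ i) • g i := by
  rw [← Finset.add_sum_erase _ _ hi, ← Finset.add_sum_erase _ _ hi, Function.update_self,
    Finset.sum_congr rfl fun j hj => by rw [Function.update_of_ne (Finset.ne_of_mem_erase hj)],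
    sub_smul]
  abel

theorem Finset.sum_ite_smul_eq_add_sum_sdiff {ι k E : Type*} [DecidableEq ι] [Semiring k]
    [AddCommMonoid E] [Module k E] {Ω Φ : Finset ι} (hΩΦ : Ω ⊆ Φ) (μ : ι → k) (g : ι → E) :
    ∑ v ∈ Φ, (if v ∈ Ω then μ v else 1) • g v = ∑ v ∈ Ω, μ v • g v + ∑ v ∈ Φ \ Ω, g v := by
  rw [← Finset.sum_sdiff hΩΦ, add_comm]
  congr 1
  · exact Finset.sum_congr rfl fun v hv => by rw [if_pos hv]
  · exact Finset.sum_congr rfl fun v hv => by rw [if_neg (Finset.mem_sdiff.1 hv).2, one_smul]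

theorem Finset.sum_smul_mem_convexHull {k E : Type*} [Field k] [LinearOrder k]
    [IsStrictOrderedRing k] [AddCommGroup E] [Module k E] {s : Finset E} {w : E → k}
    (hw : ∀ v ∈ s, 0 ≤ w v) (hw1 : ∑ v ∈ s, w v = 1) :
    ∑ v ∈ s, w v • v ∈ convexHull k (s : Set E) :=
  (convex_convexHull k _).sum_mem hw hw1 fun _ hv => subset_convexHull k _ hv

theorem Finset.exists_pos_weights_of_mem_convexHull {k E : Type*} [Field k] [LinearOrder k]
    [IsStrictOrderedRing k] [AddCommGroup E] [Module k E] {s : Finset E} {y : E}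
    (hy : y ∈ convexHull k (s : Set E)) :
    ∃ Φ ⊆ s, ∃ w : E → k, (∀ v ∈ Φ, 0 < w v) ∧ ∑ v ∈ Φ, w v = 1 ∧ ∑ v ∈ Φ, w v • v = y := by
  obtain ⟨w, hw0, hw1, hwy⟩ := Finset.mem_convexHull'.1 hy
  refine ⟨s.filter (w · ≠ 0), Finset.filter_subset _ _, w, fun v hv => ?_, ?_, ?_⟩
  · obtain ⟨hvs, hv0⟩ := Finset.mem_filter.1 hv
    exact (hw0 v hvs).lt_of_ne' hv0
  · rw [Finset.sum_filter_ne_zero, hw1]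
  · rw [← hwy]
    exact Finset.sum_filter_of_ne fun v _ h hv => h (by rw [hv, zero_smul])

theorem AffineIndependent.eq_of_sum_smul_eq {k E : Type*} [Ring k] [AddCommGroup E] [Module k E]
    {Φ : Finset E} (hΦ : AffineIndependent k ((↑) : Φ → E)) {a b : E → k}
    (hsum : ∑ v ∈ Φ, a v = ∑ v ∈ Φ, b v) (hvec : ∑ v ∈ Φ, a v • v = ∑ v ∈ Φ, b v • v) :
    ∀ v ∈ Φ, a v = b v := by
  have h1 : ∑ e : Φ, (a e - b e) = 0 := by
    rw [Finset.sum_sub_distrib, Finset.sum_coe_sort Φ a, Finset.sum_coe_sort Φ b, hsum, sub_self]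
  have h2 : ∑ e : Φ, (a e - b e) • (e : E) = 0 := by
    simp only [sub_smul, Finset.sum_sub_distrib]
    rw [Finset.sum_coe_sort Φ (fun v => a v • v), Finset.sum_coe_sort Φ (fun v => b v • v), hvec,
      sub_self]
  intro v hv
  exact sub_eq_zero.1 (affineIndependent_iff.1 hΦ _ _ h1 h2 ⟨v, hv⟩ (Finset.mem_univ _))

theorem AffineIndependent.subset_of_sum_smul_mem_convexHull {k E : Type*} [Field k]
    [LinearOrder k] [IsStrictOrderedRing k] [AddCommGroup E] [Module k E] {Φ Ψ : Finset E}
    (hΦ : AffineIndependent k ((↑) : Φ → E)) (hΨ : Ψ ⊆ Φ) {w : E → k} (hw : ∀ v ∈ Φ, 0 < w v)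
    (hw1 : ∑ v ∈ Φ, w v = 1) (hy : ∑ v ∈ Φ, w v • v ∈ convexHull k (Ψ : Set E)) : Φ ⊆ Ψ := by
  classical
  obtain ⟨w', -, hw'1, hw'y⟩ := Finset.mem_convexHull'.1 hy
  have hΨΦ : Φ ∩ Ψ = Ψ := Finset.inter_eq_right.2 hΨ
  have heq := hΦ.eq_of_sum_smul_eq (a := w) (b := fun v => if v ∈ Ψ then w' v else 0)
    (by rw [Finset.sum_ite_mem, hΨΦ, hw1, hw'1])
    (by simp only [ite_smul, zero_smul]; rw [Finset.sum_ite_mem, hΨΦ, hw'y])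
  intro v hv
  by_contra hvΨ
  have := heq v hv
  rw [if_neg hvΨ] at this
  exact (hw v hv).ne' this

namespace RationalEhrhart

variable {d : ℕ}

/-! ### Lattice points -/

def latticeEmbedding (d : ℕ) : (Fin d → ℤ) × ℤ →+ (Fin d → ℝ) × ℝ :=
  (AddMonoidHom.compLeft (Int.castAddHom ℝ) (Fin d)).prodMap (Int.castAddHom ℝ)

def latticeC (d : ℕ) : AddSubgroup ((Fin d → ℝ) × ℝ) := (latticeEmbedding d).range

theorem mem_latticeC {p : (Fin d → ℝ) × ℝ} : p ∈ latticeC d ↔ IsLatticePtC p := by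
  constructor
  · rintro ⟨n, rfl⟩
    exact ⟨fun i => ⟨n.1 i, rfl⟩, n.2, rfl⟩
  · rintro ⟨h1, m, hm⟩
    choose n hn using h1
    exact ⟨(n, m), Prod.ext (funext fun i => (hn i).symm) hm.symm⟩

theorem isometry_latticeEmbedding : Isometry (latticeEmbedding d) :=
  (Isometry.piMap (fun _ => (Int.cast : ℤ → ℝ)) fun _ => Real.isometry_intCast).prodMap
    Real.isometry_intCast

theorem finite_inter_latticeC {S : Set ((Fin d → ℝ) × ℝ)} (hS : IsBounded S) :
    (S ∩ latticeC d).Finite := by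
  have hpre : IsBounded (latticeEmbedding d ⁻¹' S) :=
    isometry_latticeEmbedding.antilipschitz.isBounded_preimage hS
  refine ((hpre.isCompact_closure.finite_of_discrete.subset subset_closure).image
    (latticeEmbedding d)).subset ?_
  rintro p ⟨hpS, n, rfl⟩
  exact ⟨n, hpS, rfl⟩

theorem rayGen_mem_latticeC {q : ℕ} {v : Fin d → ℝ} (hv : ∀ i, ∃ n : ℤ, (q : ℝ) * v i = n) :
    rayGen q v ∈ latticeC d :=
  mem_latticeC.2 ⟨hv, q, by simp [rayGen]⟩

/-! ### Height series -/

def heightSlice (S : Set ((Fin d → ℝ) × ℝ)) (t : ℕ) : Set ((Fin d → ℝ) × ℝ) :=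
  {p ∈ S | p.2 = t}

noncomputable def heightSeries (S : Set ((Fin d → ℝ) × ℝ)) : PowerSeries ℤ :=
  PowerSeries.mk fun t => ((heightSlice S t).ncard : ℤ)

theorem heightSeries_union {S T : Set ((Fin d → ℝ) × ℝ)} (hST : Disjoint S T)
    (hfin : ∀ t, (heightSlice (S ∪ T) t).Finite) :
    heightSeries (S ∪ T) = heightSeries S + heightSeries T := by
  ext t
  have hslice : heightSlice (S ∪ T) t = heightSlice S t ∪ heightSlice T t := Set.sep_union
  simp only [heightSeries, PowerSeries.coeff_mk, map_add, hslice]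
  have hdisj : Disjoint (heightSlice S t) (heightSlice T t) :=
    hST.mono (Set.sep_subset _ _) (Set.sep_subset _ _)
  have hfin' : (heightSlice S t ∪ heightSlice T t).Finite := hslice ▸ hfin t
  rw [Set.ncard_union_eq hdisj (hfin'.subset Set.subset_union_left)
    (hfin'.subset Set.subset_union_right), Nat.cast_add]

theorem heightSeries_biUnion {ι : Type*} (s : Finset ι) {S : ι → Set ((Fin d → ℝ) × ℝ)}
    (hdisj : (s : Set ι).PairwiseDisjoint S) (hS : ∀ i ∈ s, ∀ t, (heightSlice (S i) t).Finite) :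
    heightSeries (⋃ i ∈ s, S i) = ∑ i ∈ s, heightSeries (S i) := by
  ext t
  have hslice : heightSlice (⋃ i ∈ s, S i) t = ⋃ i ∈ (s : Set ι), heightSlice (S i) t := by
    ext p; simp only [heightSlice, Set.mem_iUnion, Set.mem_sep_iff]; grind
  simp only [heightSeries, PowerSeries.coeff_mk, map_sum, hslice]
  rw [Set.Finite.ncard_biUnion s.finite_toSet (fun i hi => hS i hi t)
    (hdisj.mono fun i => Set.sep_subset _ _), finsum_mem_coe_finset, Nat.cast_sum]

theorem heightSeries_image_add {S : Set ((Fin d → ℝ) × ℝ)} (hS : ∀ p ∈ S, 0 ≤ p.2)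
    {g : (Fin d → ℝ) × ℝ} {h : ℕ} (hg : g.2 = h) :
    heightSeries ((· + g) '' S) = PowerSeries.X ^ h * heightSeries S := by
  ext t
  have hslice : heightSlice ((· + g) '' S) t = (· + g) '' {p ∈ S | p.2 + h = t} := by
    ext p
    simp only [heightSlice, Set.mem_image, Set.mem_sep_iff]
    constructor
    · rintro ⟨⟨p, hp, rfl⟩, ht⟩
      exact ⟨p, ⟨hp, by rw [← ht, Prod.snd_add, hg]⟩, rfl⟩
    · rintro ⟨p, ⟨hp, ht⟩, rfl⟩
      exact ⟨⟨p, hp, rfl⟩, by rw [← ht, Prod.snd_add, hg]⟩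
  simp only [heightSeries, PowerSeries.coeff_mk, PowerSeries.coeff_X_pow_mul', hslice,
    Set.ncard_image_of_injective _ (add_left_injective g)]
  split_ifs with hht
  · congr 3
    ext p
    simp only [Nat.cast_sub hht, eq_sub_iff_add_eq]
  · have : {p ∈ S | p.2 + h = t} = ∅ := by
      refine Set.eq_empty_of_forall_notMem fun p ⟨hp, ht⟩ => hht ?_
      exact_mod_cast (show (h : ℝ) ≤ t by linarith [hS p hp])
    rw [this, Set.ncard_empty, Nat.cast_zero]

theorem heightSeries_singleton {p : (Fin d → ℝ) × ℝ} {n : ℕ} (hp : p.2 = n) :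
    heightSeries {p} = PowerSeries.X ^ n := by
  ext t
  rw [heightSeries, PowerSeries.coeff_mk, PowerSeries.coeff_X_pow]
  by_cases h : t = n
  · have : heightSlice {p} t = {p} :=
      Set.ext fun x => ⟨fun hx => hx.1, fun hx => ⟨hx, by rw [Set.mem_singleton_iff.1 hx, hp, h]⟩⟩
    rw [this, Set.ncard_singleton, if_pos h, Nat.cast_one]
  · have : heightSlice {p} t = ∅ := Set.eq_empty_of_forall_notMem fun x ⟨hx, hxt⟩ =>
      h (by rw [Set.mem_singleton_iff.1 hx, hp] at hxt; exact_mod_cast hxt.symm)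
    rw [this, Set.ncard_empty, if_neg h, Nat.cast_zero]

/-! ### Cones over simplices -/

theorem sum_smul_rayGen_fst (q : ℕ) (Φ : Finset (Fin d → ℝ)) (μ : (Fin d → ℝ) → ℝ) :
    (∑ v ∈ Φ, μ v • rayGen q v).1 = ∑ v ∈ Φ, (μ v * q) • v := by
  simp [rayGen, Prod.fst_sum, smul_smul]

theorem sum_smul_rayGen_snd (q : ℕ) (Φ : Finset (Fin d → ℝ)) (μ : (Fin d → ℝ) → ℝ) :
    (∑ v ∈ Φ, μ v • rayGen q v).2 = ∑ v ∈ Φ, μ v * q := by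
  simp [rayGen, Prod.snd_sum]

theorem eq_of_sum_smul_rayGen_eq {q : ℕ} (hq : q ≠ 0) {Φ : Finset (Fin d → ℝ)}
    (hΦ : AffineIndependent ℝ ((↑) : Φ → (Fin d → ℝ))) {μ ν : (Fin d → ℝ) → ℝ}
    (h : ∑ v ∈ Φ, μ v • rayGen q v = ∑ v ∈ Φ, ν v • rayGen q v) : ∀ v ∈ Φ, μ v = ν v := by
  have hsnd := congrArg Prod.snd h
  have hfst := congrArg Prod.fst h
  rw [sum_smul_rayGen_snd, sum_smul_rayGen_snd, ← Finset.sum_mul, ← Finset.sum_mul] at hsnd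
  rw [sum_smul_rayGen_fst, sum_smul_rayGen_fst] at hfst
  intro v hv
  have := hΦ.eq_of_sum_smul_eq (by rw [← Finset.sum_mul, ← Finset.sum_mul, hsnd]) hfst v hv
  exact mul_right_cancel₀ (Nat.cast_ne_zero.2 hq) this

/-- The open cone over `Φ` for `A = Φ`, the half-open parallelepiped for `A = ∅`. -/
def simplexCone (q : ℕ) (Φ A : Finset (Fin d → ℝ)) : Set ((Fin d → ℝ) × ℝ) :=
  {p | p ∈ latticeC d ∧ ∃ μ : (Fin d → ℝ) → ℝ, (∀ v ∈ Φ, 0 < μ v) ∧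
    (∀ v ∈ Φ, v ∉ A → μ v ≤ 1) ∧ p = ∑ v ∈ Φ, μ v • rayGen q v}

theorem simplexCone_snd_nonneg {q : ℕ} {Φ A : Finset (Fin d → ℝ)} {p : (Fin d → ℝ) × ℝ}
    (hp : p ∈ simplexCone q Φ A) : 0 ≤ p.2 := by
  obtain ⟨-, μ, hμ, -, rfl⟩ := hp
  rw [sum_smul_rayGen_snd]
  exact Finset.sum_nonneg fun v hv => mul_nonneg (hμ v hv).le (Nat.cast_nonneg q)

theorem finite_heightSlice_simplexCone {q : ℕ} (hq : q ≠ 0) (Φ A : Finset (Fin d → ℝ))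
    (t : ℕ) : (heightSlice (simplexCone q Φ A) t).Finite := by
  refine (finite_inter_latticeC (isBounded_sum_smul Φ (rayGen q) (t / q))).subset ?_
  rintro p ⟨⟨hlat, μ, hμ, -, rfl⟩, ht⟩
  refine ⟨⟨μ, fun v hv => ⟨(hμ v hv).le, ?_⟩, rfl⟩, hlat⟩
  have hq' : (0 : ℝ) < q := by positivity
  rw [sum_smul_rayGen_snd] at ht
  rw [le_div_iff₀ hq', ← ht]
  exact Finset.single_le_sum (fun w hw => mul_nonneg (hμ w hw).le hq'.le) hv

theorem simplexCone_insert_eq {q : ℕ} {Φ A : Finset (Fin d → ℝ)} {v₀ : Fin d → ℝ}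
    (hv₀ : v₀ ∈ Φ) (hg : rayGen q v₀ ∈ latticeC d) :
    simplexCone q Φ (insert v₀ A) =
      simplexCone q Φ A ∪ (· + rayGen q v₀) '' simplexCone q Φ (insert v₀ A) := by
  ext p
  constructor
  · rintro ⟨hlat, μ, hμ, hle, rfl⟩
    -- if `μ v₀ > 1`, subtracting the generator of `v₀` keeps the point in the cone
    by_cases h1 : μ v₀ ≤ 1
    · refine Or.inl ⟨hlat, μ, hμ, fun v hv hvA => ?_, rfl⟩
      by_cases hvv : v = v₀
      · exact hvv ▸ h1
      · exact hle v hv (by simp [hvv, hvA])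
    · refine Or.inr ⟨_, ⟨sub_mem hlat hg, Function.update μ v₀ (μ v₀ - 1), fun v hv => ?_,
        fun v hv hvA => ?_, ?_⟩, sub_add_cancel _ _⟩
      · by_cases hv' : v = v₀
        · rw [hv', Function.update_self]
          linarith
        · simpa [hv'] using hμ v hv
      · have hv' : v ≠ v₀ := fun h => hvA (h ▸ Finset.mem_insert_self _ _)
        simpa [hv'] using hle v hv hvA
      · rw [Finset.sum_update_smul hv₀, sub_sub_cancel_left, neg_smul, one_smul, sub_eq_add_neg]
  · rintro (⟨hlat, μ, hμ, hle, rfl⟩ | ⟨p, ⟨hlat, μ, hμ, hle, rfl⟩, rfl⟩)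
    · exact ⟨hlat, μ, hμ, fun v hv hvA => hle v hv fun h => hvA (Finset.mem_insert_of_mem h), rfl⟩
    · refine ⟨add_mem hlat hg, Function.update μ v₀ (μ v₀ + 1), fun v hv => ?_,
        fun v hv hvA => ?_, ?_⟩
      · by_cases hv' : v = v₀
        · rw [hv', Function.update_self]
          linarith [hμ v₀ hv₀]
        · simpa [hv'] using hμ v hv
      · have hv' : v ≠ v₀ := fun h => hvA (h ▸ Finset.mem_insert_self _ _)
        simpa [hv'] using hle v hv hvA
      · rw [Finset.sum_update_smul hv₀, add_sub_cancel_left, one_smul]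

theorem disjoint_simplexCone_image_add {q : ℕ} (hq : q ≠ 0) {Φ A : Finset (Fin d → ℝ)}
    (hΦ : AffineIndependent ℝ ((↑) : Φ → (Fin d → ℝ))) {v₀ : Fin d → ℝ} (hv₀ : v₀ ∈ Φ)
    (hv₀A : v₀ ∉ A) :
    Disjoint (simplexCone q Φ A) ((· + rayGen q v₀) '' simplexCone q Φ (insert v₀ A)) := by
  rw [Set.disjoint_left]
  rintro _ ⟨-, μ, -, hle, rfl⟩ ⟨_, ⟨-, ν, hν, -, rfl⟩, hp⟩
  beta_reduce at hp
  rw [← one_smul ℝ (rayGen q v₀), ← add_sub_cancel_left (ν v₀) 1, ← Finset.sum_update_smul hv₀]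
    at hp
  have := eq_of_sum_smul_rayGen_eq hq hΦ hp v₀ hv₀
  simp only [Function.update_self] at this
  linarith [hle v₀ hv₀ hv₀A, hν v₀ hv₀]

theorem heightSeries_simplexCone_insert_mul {q : ℕ} (hq : q ≠ 0) {Φ A : Finset (Fin d → ℝ)}
    (hΦ : AffineIndependent ℝ ((↑) : Φ → (Fin d → ℝ))) {v₀ : Fin d → ℝ} (hv₀ : v₀ ∈ Φ)
    (hv₀A : v₀ ∉ A) (hg : rayGen q v₀ ∈ latticeC d) :
    heightSeries (simplexCone q Φ (insert v₀ A)) * (1 - PowerSeries.X ^ q) =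
      heightSeries (simplexCone q Φ A) := by
  have hsplit := simplexCone_insert_eq (A := A) hv₀ hg
  have hfin := finite_heightSlice_simplexCone hq Φ (insert v₀ A)
  have h := heightSeries_union (disjoint_simplexCone_image_add hq hΦ hv₀ hv₀A) (hsplit ▸ hfin)
  rw [← hsplit, heightSeries_image_add (fun p hp => simplexCone_snd_nonneg hp) rfl] at h
  linear_combination h

theorem heightSeries_simplexCone_mul_pow {q : ℕ} (hq : q ≠ 0) {Φ : Finset (Fin d → ℝ)}
    (hΦ : AffineIndependent ℝ ((↑) : Φ → (Fin d → ℝ))) (hg : ∀ v ∈ Φ, rayGen q v ∈ latticeC d)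
    {A : Finset (Fin d → ℝ)} (hA : A ⊆ Φ) :
    heightSeries (simplexCone q Φ A) * (1 - PowerSeries.X ^ q) ^ A.card =
      heightSeries (simplexCone q Φ ∅) := by
  induction A using Finset.induction_on with
  | empty => simp
  | insert v₀ A hv₀A ih =>
    have hv₀ := hA (Finset.mem_insert_self v₀ A)
    rw [Finset.card_insert_of_notMem hv₀A, pow_succ', ← mul_assoc,
      heightSeries_simplexCone_insert_mul hq hΦ hv₀ hv₀A (hg v₀ hv₀),
      ih ((Finset.subset_insert v₀ A).trans hA)]

def faceBoxLattice (q : ℕ) (Ω : Finset (Fin d → ℝ)) : Set ((Fin d → ℝ) × ℝ) :=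
  faceBox q Ω ∩ latticeC d

theorem finite_faceBoxLattice (q : ℕ) (Ω : Finset (Fin d → ℝ)) :
    (faceBoxLattice q Ω).Finite := by
  refine (finite_inter_latticeC (isBounded_sum_smul Ω (rayGen q) 1)).subset
    (Set.inter_subset_inter_left _ ?_)
  rintro p ⟨μ, hμ, rfl⟩
  exact ⟨μ, fun v hv => ⟨(hμ v hv).1.le, (hμ v hv).2.le⟩, rfl⟩

theorem faceBoxLattice_snd_eq {q : ℕ} {Ω : Finset (Fin d → ℝ)} {p : (Fin d → ℝ) × ℝ}
    (hp : p ∈ faceBoxLattice q Ω) : p.2 = (⌊p.2⌋.toNat : ℝ) := by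
  obtain ⟨⟨μ, hμ, hpμ⟩, hlat⟩ := hp
  obtain ⟨-, n, hn⟩ := mem_latticeC.1 hlat
  have h0 : 0 ≤ p.2 := by
    rw [hpμ, sum_smul_rayGen_snd]
    exact Finset.sum_nonneg fun v hv => mul_nonneg (hμ v hv).1.le (Nat.cast_nonneg q)
  have hn0 : 0 ≤ n := by exact_mod_cast hn ▸ h0
  rw [hn, Int.floor_intCast]
  exact_mod_cast (Int.toNat_of_nonneg hn0).symm

theorem coe_boxPoly (q : ℕ) (Ω : Finset (Fin d → ℝ)) :
    (boxPoly q Ω : PowerSeries ℤ) = heightSeries (faceBoxLattice q Ω) := by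
  have hset : {p | p ∈ faceBox q Ω ∧ IsLatticePtC p} = faceBoxLattice q Ω := by
    ext p; simp [faceBoxLattice, mem_latticeC]
  have hbiUnion : faceBoxLattice q Ω = ⋃ p ∈ (finite_faceBoxLattice q Ω).toFinset, {p} := by
    simp
  rw [boxPoly, genPoly, hset, finsum_mem_eq_finite_toFinset_sum _ (finite_faceBoxLattice q Ω)]
  conv_rhs => rw [hbiUnion]
  rw [heightSeries_biUnion _ (Set.pairwiseDisjoint_singleton' _)
    fun p _ t => (Set.finite_singleton p).subset (Set.sep_subset _ _)]
  rw [← Polynomial.coeToPowerSeries.ringHom_apply, map_sum]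
  exact Finset.sum_congr rfl fun p hp => by
    rw [map_pow, Polynomial.coeToPowerSeries.ringHom_apply, Polynomial.coe_X]
    exact (heightSeries_singleton (faceBoxLattice_snd_eq ((Set.Finite.mem_toFinset _).1 hp))).symm

noncomputable def halfOpenBoxPoly (q : ℕ) (Φ : Finset (Fin d → ℝ)) : Polynomial ℤ :=
  ∑ Ω ∈ Φ.powerset, boxPoly q Ω * Polynomial.X ^ (q * (Φ.card - Ω.card))

theorem simplexCone_empty_eq_biUnion {q : ℕ} {Φ : Finset (Fin d → ℝ)}
    (hg : ∀ v ∈ Φ, rayGen q v ∈ latticeC d) :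
    simplexCone q Φ ∅ =
      ⋃ Ω ∈ Φ.powerset, (· + ∑ v ∈ Φ \ Ω, rayGen q v) '' faceBoxLattice q Ω := by
  have hshift : ∀ Ω, ∑ v ∈ Φ \ Ω, rayGen q v ∈ latticeC d := fun Ω =>
    sum_mem fun v hv => hg v (Finset.mem_sdiff.1 hv).1
  ext p
  simp only [Set.mem_iUnion, Set.mem_image, Finset.mem_powerset]
  constructor
  · rintro ⟨hlat, μ, hμ, hle, rfl⟩
    -- `Ω` records the coordinates `μ v < 1`; the others equal `1`
    set Ω := Φ.filter (μ · < 1)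
    have hμΩ : ∀ v ∈ Φ, (if v ∈ Ω then μ v else 1) = μ v := fun v hv => by
      split_ifs with h
      · rfl
      · exact le_antisymm (not_lt.1 fun h' => h (Finset.mem_filter.2 ⟨hv, h'⟩))
          (hle v hv (Finset.notMem_empty v))
    have hrep : ∑ v ∈ Φ, μ v • rayGen q v =
        ∑ v ∈ Ω, μ v • rayGen q v + ∑ v ∈ Φ \ Ω, rayGen q v := by
      rw [← Finset.sum_ite_smul_eq_add_sum_sdiff (Finset.filter_subset _ _)]
      exact Finset.sum_congr rfl fun v hv => by rw [hμΩ v hv]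
    refine ⟨Ω, Finset.filter_subset _ _, _, ⟨⟨μ, fun v hv => ?_, rfl⟩, ?_⟩, hrep.symm⟩
    · exact ⟨hμ v (Finset.mem_filter.1 hv).1, (Finset.mem_filter.1 hv).2⟩
    · rw [hrep] at hlat
      simpa using sub_mem hlat (hshift Ω)
  · rintro ⟨Ω, hΩ, p, ⟨⟨μ, hμ, rfl⟩, hlat⟩, rfl⟩
    refine ⟨add_mem hlat (hshift Ω), fun v => if v ∈ Ω then μ v else 1, fun v hv => ?_,
      fun v hv _ => ?_, (Finset.sum_ite_smul_eq_add_sum_sdiff hΩ μ (rayGen q)).symm⟩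
    · dsimp only
      split_ifs with h
      exacts [(hμ v h).1, one_pos]
    · dsimp only
      split_ifs with h
      exacts [(hμ v h).2.le, le_rfl]

theorem pairwiseDisjoint_image_add_faceBoxLattice {q : ℕ} (hq : q ≠ 0)
    {Φ : Finset (Fin d → ℝ)} (hΦ : AffineIndependent ℝ ((↑) : Φ → (Fin d → ℝ))) :
    (Φ.powerset : Set (Finset (Fin d → ℝ))).PairwiseDisjoint
      fun Ω => (· + ∑ v ∈ Φ \ Ω, rayGen q v) '' faceBoxLattice q Ω := by
  intro Ω₁ hΩ₁ Ω₂ hΩ₂ hne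
  rw [Function.onFun, Set.disjoint_left]
  rintro _ ⟨_, ⟨⟨μ₁, hμ₁, rfl⟩, -⟩, rfl⟩ ⟨_, ⟨⟨μ₂, hμ₂, rfl⟩, -⟩, h⟩
  rw [Finset.mem_coe, Finset.mem_powerset] at hΩ₁ hΩ₂
  beta_reduce at h
  rw [← Finset.sum_ite_smul_eq_add_sum_sdiff hΩ₁,
    ← Finset.sum_ite_smul_eq_add_sum_sdiff hΩ₂] at h
  have heq := eq_of_sum_smul_rayGen_eq hq hΦ h
  have hmem : ∀ {Ω : Finset (Fin d → ℝ)} {μ : (Fin d → ℝ) → ℝ}, Ω ⊆ Φ →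
      (∀ v ∈ Ω, 0 < μ v ∧ μ v < 1) → ∀ v, v ∈ Ω ↔ v ∈ Φ ∧ (if v ∈ Ω then μ v else 1) < 1 := by
    intro Ω μ hΩ hμ v
    by_cases hv : v ∈ Ω
    · simp [hv, hΩ hv, (hμ v hv).2]
    · simp [hv]
  refine hne (Finset.ext fun v => ?_)
  rw [hmem hΩ₁ hμ₁, hmem hΩ₂ hμ₂]
  exact and_congr_right fun hv => by rw [heq v hv]

theorem heightSeries_simplexCone_empty {q : ℕ} (hq : q ≠ 0) {Φ : Finset (Fin d → ℝ)}
    (hΦ : AffineIndependent ℝ ((↑) : Φ → (Fin d → ℝ))) (hg : ∀ v ∈ Φ, rayGen q v ∈ latticeC d) :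
    heightSeries (simplexCone q Φ ∅) = halfOpenBoxPoly q Φ := by
  rw [simplexCone_empty_eq_biUnion hg,
    heightSeries_biUnion _ (pairwiseDisjoint_image_add_faceBoxLattice hq hΦ)
      fun Ω _ t => ((finite_faceBoxLattice q Ω).image _).subset (Set.sep_subset _ _),
    halfOpenBoxPoly, ← Polynomial.coeToPowerSeries.ringHom_apply, map_sum]
  refine Finset.sum_congr rfl fun Ω hΩ => ?_
  have hheight : (∑ v ∈ Φ \ Ω, rayGen q v).2 = ((q * (Φ.card - Ω.card) : ℕ) : ℝ) := by
    rw [← Finset.card_sdiff_of_subset (Finset.mem_powerset.1 hΩ), Prod.snd_sum]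
    simp [rayGen, mul_comm]
  rw [heightSeries_image_add (fun p hp => (faceBoxLattice_snd_eq hp).symm ▸ Nat.cast_nonneg _)
      hheight, map_mul, map_pow, Polynomial.coeToPowerSeries.ringHom_apply,
    Polynomial.coeToPowerSeries.ringHom_apply, Polynomial.coe_X, coe_boxPoly, mul_comm]

theorem heightSeries_simplexCone_mul {q : ℕ} (hq : q ≠ 0) {Φ : Finset (Fin d → ℝ)}
    (hΦ : AffineIndependent ℝ ((↑) : Φ → (Fin d → ℝ))) (hg : ∀ v ∈ Φ, rayGen q v ∈ latticeC d)
    {D : ℕ} (hD : Φ.card ≤ D + 1) :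
    heightSeries (simplexCone q Φ Φ) * (1 - PowerSeries.X ^ q) ^ (D + 1) =
      ((halfOpenBoxPoly q Φ * (1 - Polynomial.X ^ q) ^ (D + 1 - Φ.card) : Polynomial ℤ) :
        PowerSeries ℤ) := by
  rw [← Nat.add_sub_cancel' hD, pow_add, ← mul_assoc,
    heightSeries_simplexCone_mul_pow hq hΦ hg subset_rfl, heightSeries_simplexCone_empty hq hΦ hg,
    Nat.add_sub_cancel_left]
  push_cast
  ring

/-! ### The cone over a triangulated polytope -/

def polytopeCone (P : Set (Fin d → ℝ)) : Set ((Fin d → ℝ) × ℝ) :=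
  {p | p ∈ latticeC d ∧ ∃ t : ℕ, p.2 = t ∧ p.1 ∈ (t : ℝ) • P}

theorem ehr_eq_heightSeries (P : Set (Fin d → ℝ)) : ehr P = heightSeries (polytopeCone P) := by
  ext t
  have hslice : heightSlice (polytopeCone P) t =
      (fun x => (x, (t : ℝ))) '' {v | v ∈ (t : ℝ) • P ∧ IsLatticePt v} := by
    ext ⟨x, s⟩
    simp only [heightSlice, polytopeCone, mem_latticeC, IsLatticePtC, IsLatticePt,
      Set.mem_ofPred_eq, Set.mem_image, Prod.mk.injEq]
    constructor
    · rintro ⟨⟨⟨hx, -⟩, t', hs, hxP⟩, rfl⟩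
      obtain rfl : t' = t := by exact_mod_cast hs.symm
      exact ⟨x, ⟨hxP, hx⟩, rfl, rfl⟩
    · rintro ⟨x, ⟨hxP, hx⟩, rfl, rfl⟩
      exact ⟨⟨⟨hx, t, by simp⟩, t, rfl, hxP⟩, rfl⟩
  rw [ehr, heightSeries, PowerSeries.coeff_mk, PowerSeries.coeff_mk, latticeCount, hslice,
    Set.ncard_image_of_injective _ fun a b h => congrArg Prod.fst h]

theorem eq_zero_of_mem_simplexCone_empty {q : ℕ} {A : Finset (Fin d → ℝ)}
    {p : (Fin d → ℝ) × ℝ} (hp : p ∈ simplexCone q ∅ A) : p = 0 := by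
  obtain ⟨-, μ, -, -, rfl⟩ := hp
  exact Finset.sum_empty

theorem snd_pos_of_mem_simplexCone {q : ℕ} (hq : q ≠ 0) {Φ A : Finset (Fin d → ℝ)}
    (hΦ : Φ.Nonempty) {p : (Fin d → ℝ) × ℝ} (hp : p ∈ simplexCone q Φ A) : 0 < p.2 := by
  obtain ⟨-, μ, hμ, -, rfl⟩ := hp
  rw [sum_smul_rayGen_snd]
  exact Finset.sum_pos (fun v hv => mul_pos (hμ v hv) (by positivity)) hΦ

theorem eq_empty_iff_of_mem_simplexCone {q : ℕ} (hq : q ≠ 0) {Φ A : Finset (Fin d → ℝ)}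
    {p : (Fin d → ℝ) × ℝ} (hp : p ∈ simplexCone q Φ A) : Φ = ∅ ↔ p = 0 := by
  refine ⟨fun hΦ => eq_zero_of_mem_simplexCone_empty (hΦ ▸ hp), fun hp0 => ?_⟩
  by_contra hΦ
  have := snd_pos_of_mem_simplexCone hq (Finset.nonempty_iff_ne_empty.2 hΦ) hp
  rw [hp0] at this
  exact this.ne rfl

theorem exists_weights_of_mem_simplexCone {q : ℕ} (hq : q ≠ 0) {Φ A : Finset (Fin d → ℝ)}
    (hΦ : Φ.Nonempty) {p : (Fin d → ℝ) × ℝ} (hp : p ∈ simplexCone q Φ A) :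
    ∃ w : (Fin d → ℝ) → ℝ, (∀ v ∈ Φ, 0 < w v) ∧ ∑ v ∈ Φ, w v = 1 ∧
      ∑ v ∈ Φ, w v • v = p.2⁻¹ • p.1 := by
  have hpos := snd_pos_of_mem_simplexCone hq hΦ hp
  obtain ⟨-, μ, hμ, -, rfl⟩ := hp
  rw [sum_smul_rayGen_snd] at hpos ⊢
  rw [sum_smul_rayGen_fst]
  refine ⟨fun v => μ v * q / ∑ v ∈ Φ, μ v * q, fun v hv => ?_, ?_, ?_⟩
  · have := hμ v hv
    positivity
  · rw [← Finset.sum_div, div_self hpos.ne']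
  · rw [Finset.smul_sum]
    exact Finset.sum_congr rfl fun v _ => by simp only [smul_smul, div_eq_inv_mul]

theorem mem_faces_of_mem_facesE {K : Geometry.SimplicialComplex ℝ (Fin d → ℝ)}
    {Φ : Finset (Fin d → ℝ)} (hΦ : Φ ∈ facesE K) (hne : Φ.Nonempty) : Φ ∈ K.faces :=
  (Set.mem_insert_iff.1 hΦ).resolve_left hne.ne_empty

theorem simplexCone_subset_polytopeCone {q : ℕ} (hq : q ≠ 0)
    {K : Geometry.SimplicialComplex ℝ (Fin d → ℝ)} (hK : K.space.Nonempty)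
    {Φ : Finset (Fin d → ℝ)} (hΦ : Φ ∈ facesE K) :
    simplexCone q Φ Φ ⊆ polytopeCone K.space := by
  intro p hp
  rcases Φ.eq_empty_or_nonempty with rfl | hne
  · obtain rfl := eq_zero_of_mem_simplexCone_empty hp
    exact ⟨zero_mem _, 0, by simp, by simp [Set.zero_smul_set hK]⟩
  obtain ⟨w, hw, hw1, hwp⟩ := exists_weights_of_mem_simplexCone hq hne hp
  have hpos := snd_pos_of_mem_simplexCone hq hne hp
  obtain ⟨-, n, hn⟩ := mem_latticeC.1 hp.1
  have hn0 : 0 ≤ n := by exact_mod_cast hn ▸ hpos.le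
  have hn' : p.2 = (n.toNat : ℝ) := by rw [hn]; exact_mod_cast (Int.toNat_of_nonneg hn0).symm
  refine ⟨hp.1, n.toNat, hn', ?_⟩
  rw [← hn', ← smul_inv_smul₀ hpos.ne' p.1, ← hwp]
  exact Set.smul_mem_smul_set (K.convexHull_subset_space (mem_faces_of_mem_facesE hΦ hne)
    (Finset.sum_smul_mem_convexHull (fun v hv => (hw v hv).le) hw1))

theorem polytopeCone_subset_iUnion_simplexCone {q : ℕ} (hq : q ≠ 0)
    (K : Geometry.SimplicialComplex ℝ (Fin d → ℝ)) :
    polytopeCone K.space ⊆ ⋃ Φ ∈ facesE K, simplexCone q Φ Φ := by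
  rintro p ⟨hlat, t, ht, hpK⟩
  simp only [Set.mem_iUnion, exists_prop]
  rcases Nat.eq_zero_or_pos t with rfl | htpos
  · rw [Nat.cast_zero] at ht hpK
    refine ⟨∅, Set.mem_insert _ _, hlat, 0, by simp, by simp, ?_⟩
    rw [Finset.sum_empty]
    exact Prod.ext (Set.zero_smul_set_subset _ hpK) ht
  obtain ⟨y, hy, hpy⟩ := Set.mem_smul_set.1 hpK
  obtain ⟨s, hs, hys⟩ := Geometry.SimplicialComplex.mem_space_iff.1 hy
  obtain ⟨Φ, hΦs, w, hw, hw1, hwy⟩ := Finset.exists_pos_weights_of_mem_convexHull hys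
  have hΦ : Φ.Nonempty := Finset.nonempty_of_sum_ne_zero (hw1 ▸ one_ne_zero)
  have hq' : (q : ℝ) ≠ 0 := Nat.cast_ne_zero.2 hq
  refine ⟨Φ, Set.mem_insert_of_mem _ (K.down_closed hs hΦs hΦ), hlat, fun v => t * w v / q,
    fun v hv => by have := hw v hv; positivity, fun v hv h => (h hv).elim, Prod.ext ?_ ?_⟩
  · rw [sum_smul_rayGen_fst, ← hpy, ← hwy, Finset.smul_sum]
    exact Finset.sum_congr rfl fun v _ => by rw [smul_smul, div_mul_cancel₀ _ hq']
  · rw [sum_smul_rayGen_snd, ht]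
    simp only [div_mul_cancel₀ _ hq', ← Finset.mul_sum, hw1, mul_one]

theorem polytopeCone_space_eq {q : ℕ} (hq : q ≠ 0) {K : Geometry.SimplicialComplex ℝ (Fin d → ℝ)}
    (hK : K.space.Nonempty) : polytopeCone K.space = ⋃ Φ ∈ facesE K, simplexCone q Φ Φ :=
  (polytopeCone_subset_iUnion_simplexCone hq K).antisymm
    (Set.iUnion₂_subset fun _ hΦ => simplexCone_subset_polytopeCone hq hK hΦ)

theorem eq_of_mem_simplexCone_of_mem_faces {q : ℕ} (hq : q ≠ 0)
    {K : Geometry.SimplicialComplex ℝ (Fin d → ℝ)} {Φ₁ Φ₂ : Finset (Fin d → ℝ)}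
    (hΦ₁ : Φ₁ ∈ K.faces) (hΦ₂ : Φ₂ ∈ K.faces) {p : (Fin d → ℝ) × ℝ}
    (hp₁ : p ∈ simplexCone q Φ₁ Φ₁) (hp₂ : p ∈ simplexCone q Φ₂ Φ₂) : Φ₁ = Φ₂ := by
  obtain ⟨w₁, hw₁, hw₁1, hy₁⟩ :=
    exists_weights_of_mem_simplexCone hq (K.nonempty_of_mem_faces hΦ₁) hp₁
  obtain ⟨w₂, hw₂, hw₂1, hy₂⟩ :=
    exists_weights_of_mem_simplexCone hq (K.nonempty_of_mem_faces hΦ₂) hp₂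
  have hy : ∑ v ∈ Φ₁, w₁ v • v = ∑ v ∈ Φ₂, w₂ v • v := hy₁.trans hy₂.symm
  have hinter := K.inter_subset_convexHull hΦ₁ hΦ₂
    ⟨Finset.sum_smul_mem_convexHull (fun v hv => (hw₁ v hv).le) hw₁1,
      hy ▸ Finset.sum_smul_mem_convexHull (fun v hv => (hw₂ v hv).le) hw₂1⟩
  rw [← Finset.coe_inter] at hinter
  have h₁ := (K.indep hΦ₁).subset_of_sum_smul_mem_convexHull
    Finset.inter_subset_left hw₁ hw₁1 hinter
  have h₂ := (K.indep hΦ₂).subset_of_sum_smul_mem_convexHull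
    Finset.inter_subset_right hw₂ hw₂1 (hy ▸ hinter)
  exact (h₁.trans Finset.inter_subset_right).antisymm (h₂.trans Finset.inter_subset_left)

theorem pairwiseDisjoint_simplexCone {q : ℕ} (hq : q ≠ 0)
    (K : Geometry.SimplicialComplex ℝ (Fin d → ℝ)) :
    (facesE K).PairwiseDisjoint fun Φ => simplexCone q Φ Φ := by
  intro Φ₁ hΦ₁ Φ₂ hΦ₂ hne
  refine Set.disjoint_left.2 fun p hp₁ hp₂ => hne ?_
  have h₁ := eq_empty_iff_of_mem_simplexCone hq hp₁
  have h₂ := eq_empty_iff_of_mem_simplexCone hq hp₂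
  by_cases hp : p = 0
  · rw [h₁.2 hp, h₂.2 hp]
  · exact eq_of_mem_simplexCone_of_mem_faces hq
      (mem_faces_of_mem_facesE hΦ₁ (Finset.nonempty_iff_ne_empty.2 (mt h₁.1 hp)))
      (mem_faces_of_mem_facesE hΦ₂ (Finset.nonempty_iff_ne_empty.2 (mt h₂.1 hp))) hp₁ hp₂

theorem isLowerSet_facesE (K : Geometry.SimplicialComplex ℝ (Fin d → ℝ)) :
    IsLowerSet (facesE K) := fun Φ Ω hΩΦ hΦ => by
  rcases Ω.eq_empty_or_nonempty with rfl | hne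
  · exact Set.mem_insert _ _
  · exact Set.mem_insert_of_mem _
      (K.down_closed (mem_faces_of_mem_facesE hΦ (hne.mono hΩΦ)) hΩΦ hne)

theorem affineIndependent_of_mem_facesE {K : Geometry.SimplicialComplex ℝ (Fin d → ℝ)}
    {Φ : Finset (Fin d → ℝ)} (hΦ : Φ ∈ facesE K) :
    AffineIndependent ℝ ((↑) : Φ → (Fin d → ℝ)) := by
  rcases Φ.eq_empty_or_nonempty with rfl | hne
  · exact affineIndependent_of_subsingleton ℝ _
  · exact K.indep (mem_faces_of_mem_facesE hΦ hne)

theorem mem_vertices_of_mem_facesE {K : Geometry.SimplicialComplex ℝ (Fin d → ℝ)}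
    {Φ : Finset (Fin d → ℝ)} (hΦ : Φ ∈ facesE K) {v : Fin d → ℝ} (hv : v ∈ Φ) :
    v ∈ K.vertices :=
  K.down_closed (mem_faces_of_mem_facesE hΦ ⟨v, hv⟩) (Finset.singleton_subset_iff.2 hv)
    (Finset.singleton_nonempty v)

theorem card_le_of_affineIndependent {Φ : Finset (Fin d → ℝ)}
    (hΦ : AffineIndependent ℝ ((↑) : Φ → (Fin d → ℝ))) : Φ.card ≤ d + 1 := by
  have h := hΦ.card_le_finrank_succ
  have := Submodule.finrank_le (vectorSpan ℝ (Set.range ((↑) : Φ → (Fin d → ℝ))))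
  rw [Fintype.card_coe] at h
  rw [Module.finrank_fin_fun] at this
  omega

/-- The vertices lie in the bounded set `K.space` and in the lattice `q⁻¹ ℤ^d`. -/
theorem finite_faces {q : ℕ} (hq : q ≠ 0) {K : Geometry.SimplicialComplex ℝ (Fin d → ℝ)}
    (hK : IsBounded K.space) (hg : ∀ v ∈ K.vertices, rayGen q v ∈ latticeC d) :
    K.faces.Finite := by
  have hbdd : IsBounded (rayGen q '' K.space) :=
    ((hK.smul₀ (q : ℝ)).prod (isBounded_singleton (x := (q : ℝ)))).subset <| by
      rintro _ ⟨v, hv, rfl⟩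
      exact ⟨Set.smul_mem_smul_set hv, rfl⟩
  have hinj : Function.Injective (rayGen (d := d) q) := fun a b h =>
    smul_right_injective _ (Nat.cast_ne_zero.2 hq : (q : ℝ) ≠ 0) (congrArg Prod.fst h)
  have hV : K.vertices.Finite := by
    refine Set.Finite.of_finite_image ((finite_inter_latticeC hbdd).subset ?_) hinj.injOn
    rintro _ ⟨v, hv, rfl⟩
    exact ⟨⟨v, K.vertices_subset_space hv, rfl⟩, hg v hv⟩
  refine hV.toFinset.powerset.finite_toSet.subset fun s hs => ?_
  rw [Finset.mem_coe, Finset.mem_powerset]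
  exact fun v hv => hV.mem_toFinset.2
    (K.down_closed hs (Finset.singleton_subset_iff.2 hv) (Finset.singleton_nonempty v))

/-! ### `h`-polynomials -/

theorem hPoly_comp_X_pow (D q : ℕ) (G : Finset (Finset (Fin d → ℝ))) (Ω : Finset (Fin d → ℝ)) :
    (hPoly D (G : Set (Finset (Fin d → ℝ))) Ω).comp (Polynomial.X ^ q) =
      ∑ Φ ∈ G with Ω ⊆ Φ,
        Polynomial.X ^ (q * (Φ.card - Ω.card)) * (1 - Polynomial.X ^ q) ^ (D + 1 - Φ.card) := by
  have hset : {Φ | Φ ∈ (G : Set (Finset (Fin d → ℝ))) ∧ Ω ⊆ Φ} = ↑(G.filter (Ω ⊆ ·)) := by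
    ext; simp
  rw [hPoly, hset, finsum_mem_coe_finset, Polynomial.sum_comp]
  refine Finset.sum_congr rfl fun Φ _ => ?_
  simp [pow_mul]

theorem sum_boxPoly_mul_hPoly_comp (D q : ℕ) (G : Finset (Finset (Fin d → ℝ)))
    (hG : IsLowerSet (G : Set (Finset (Fin d → ℝ)))) :
    ∑ Ω ∈ G, boxPoly q Ω * (hPoly D (G : Set (Finset (Fin d → ℝ))) Ω).comp (Polynomial.X ^ q) =
      ∑ Φ ∈ G, halfOpenBoxPoly q Φ * (1 - Polynomial.X ^ q) ^ (D + 1 - Φ.card) := by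
  simp_rw [hPoly_comp_X_pow, Finset.mul_sum]
  rw [Finset.sum_comm' (t' := G) (s' := Finset.powerset)]
  · refine Finset.sum_congr rfl fun Φ _ => ?_
    rw [halfOpenBoxPoly, Finset.sum_mul]
    exact Finset.sum_congr rfl fun Ω _ => by ring
  · intro Ω Φ
    simp only [Finset.mem_filter, Finset.mem_powerset]
    exact ⟨fun ⟨_, hΦ, hΩΦ⟩ => ⟨hΩΦ, hΦ⟩, fun ⟨hΩΦ, hΦ⟩ => ⟨hG hΩΦ hΦ, hΦ, hΩΦ⟩⟩

/-- **Rational Betke–McMullen decomposition** (Theorem `decomp`).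
For a triangulation `T` (realized as a geometric simplicial complex `K` whose underlying
space is `P`) with denominator `q` of a rational `d`-polytope `P ⊂ ℝ^d`, the Ehrhart
series of `P` satisfies
`Ehr(P;z) = (∑_{Ω ∈ T} B(Ω;z) · h_T(Ω;z^q)) / (1 − z^q)^{d+1}`,
i.e. `Ehr(P;z) · (1 − z^q)^{d+1} = ∑_{Ω ∈ T} B(Ω;z) · h_T(Ω;z^q)`, where the sum runs
over all faces `Ω` of `T` including the empty face. -/
theorem rational_Betke_McMullen {d : ℕ} (P : Set (Fin d → ℝ))
    (hP : IsRationalPolytope P) (hdim : affineSpan ℝ P = ⊤)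
    (K : Geometry.SimplicialComplex ℝ (Fin d → ℝ)) (hspace : K.space = P)
    (q : ℕ) (hq : IsDenominator q K.vertices) :
    ehr P * (1 - PowerSeries.X ^ q) ^ (d + 1)
      = ((∑ᶠ Ω ∈ facesE K,
            boxPoly q Ω * (hPoly d (facesE K) Ω).comp (Polynomial.X ^ q) :
          Polynomial ℤ) : PowerSeries ℤ) := by
  obtain ⟨hq, hclear, -⟩ := hq
  replace hq : q ≠ 0 := hq.ne'
  obtain ⟨V, -, hPV⟩ := hP
  subst hspace
  have hbdd : IsBounded K.space := hPV ▸ isBounded_convexHull.2 V.finite_toSet.isBounded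
  have hne : K.space.Nonempty := AffineSubspace.nonempty_of_affineSpan_eq_top ℝ _ _ hdim
  have hg : ∀ v ∈ K.vertices, rayGen q v ∈ latticeC d := fun v hv =>
    rayGen_mem_latticeC (hclear v hv)
  have hfin := (finite_faces hq hbdd hg).insert ∅
  set G := hfin.toFinset
  have hG : (G : Set (Finset (Fin d → ℝ))) = facesE K := hfin.coe_toFinset
  have hface : ∀ Φ ∈ G, Φ ∈ facesE K := fun Φ hΦ => hG ▸ hΦ
  calc ehr K.space * (1 - PowerSeries.X ^ q) ^ (d + 1)
      = ∑ Φ ∈ G, heightSeries (simplexCone q Φ Φ) * (1 - PowerSeries.X ^ q) ^ (d + 1) := by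
        rw [ehr_eq_heightSeries, polytopeCone_space_eq hq hne, ← hG, Finset.set_biUnion_coe,
          heightSeries_biUnion _ (hG ▸ pairwiseDisjoint_simplexCone hq K)
            fun Φ _ => finite_heightSlice_simplexCone hq Φ Φ, Finset.sum_mul]
    _ = ∑ Φ ∈ G, ((halfOpenBoxPoly q Φ * (1 - Polynomial.X ^ q) ^ (d + 1 - Φ.card) :
          Polynomial ℤ) : PowerSeries ℤ) :=
        Finset.sum_congr rfl fun Φ hΦ =>
          heightSeries_simplexCone_mul hq (affineIndependent_of_mem_facesE (hface Φ hΦ))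
            (fun v hv => hg v (mem_vertices_of_mem_facesE (hface Φ hΦ) hv))
            (card_le_of_affineIndependent (affineIndependent_of_mem_facesE (hface Φ hΦ)))
    _ = _ := by
        rw [← hG, finsum_mem_coe_finset,
          sum_boxPoly_mul_hPoly_comp d q G (hG ▸ isLowerSet_facesE K),
          ← Polynomial.coeToPowerSeries.ringHom_apply, map_sum]
        rfl

end RationalEhrhart
end

section
/- Let L = 2k+1 be an odd positive integer and let W = {(1,−L,L), (2,−L,L)} ⊂ ℤ^3. Then the integer points of box(W) = {λ_1(1,−L,L) + λ_2(2,−L,L) : 0 < λ_1, λ_2 < 1} are exactly the points (1, j−L, L−j) for j = 1, …, k and (2, −L−j, L+j) for j = 1, …, k; consequently the box polynomial is B(W;z) = Σ_{i=L−k}^{L−1} z^i + Σ_{i=L+1}^{L+k} z^i. -/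
open scoped BigOperators

/-- A point of `ℝ^m` is a lattice point if all its coordinates are integers. -/
def IsLatticePt {m : ℕ} (v : Fin m → ℝ) : Prop := ∀ i, ∃ n : ℤ, v i = (n : ℝ)

/-- The open parallelepiped spanned by two vectors `w₁, w₂ ∈ ℝ³`. -/
def box2 (w₁ w₂ : Fin 3 → ℝ) : Set (Fin 3 → ℝ) :=
  {p | ∃ l₁ l₂ : ℝ, (0 < l₁ ∧ l₁ < 1) ∧ (0 < l₂ ∧ l₂ < 1) ∧ p = l₁ • w₁ + l₂ • w₂}

/-!
Write a point of the box as `l₁ • (1, -L, L) + l₂ • (2, -L, L) = (a, -c, c)` with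
`a = l₁ + 2 l₂` and `c = (l₁ + l₂) L`. Solving for `l₁ = 2c/L - a` and `l₂ = a - c/L`, the
open box is cut out by `(a - 1) L < c < a L` and `a L < 2 c < (a + 1) L`. For integers these
force `a ∈ {1, 2}`, with `L/2 < c < L` when `a = 1` and `L < c < 3L/2` when `a = 2`; for
`L = 2k + 1` these are the ranges `L - k, …, L - 1` and `L + 1, …, L + k`, and the box
polynomial records `c`.
-/

namespace BoxF1

lemma smul_add_smul_eq (L l₁ l₂ : ℝ) :
    l₁ • ![(1 : ℝ), -L, L] + l₂ • ![(2 : ℝ), -L, L] =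
      ![l₁ + 2 * l₂, -((l₁ + l₂) * L), (l₁ + l₂) * L] := by
  ext i; fin_cases i <;> simp <;> ring

lemma mem_box2_iff {L : ℝ} (hL : 0 < L) {p : Fin 3 → ℝ} :
    p ∈ box2 ![1, -L, L] ![2, -L, L] ↔ p = ![p 0, -p 2, p 2] ∧
      (p 0 - 1) * L < p 2 ∧ p 2 < p 0 * L ∧ p 0 * L < 2 * p 2 ∧ 2 * p 2 < (p 0 + 1) * L := by
  constructor
  · rintro ⟨l₁, l₂, ⟨hl₁, hl₁'⟩, ⟨hl₂, hl₂'⟩, rfl⟩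
    simp only [smul_add_smul_eq, Matrix.cons_val_zero, Matrix.cons_val_two, Matrix.tail_cons,
      Matrix.head_cons, true_and]
    refine ⟨?_, ?_, ?_, ?_⟩ <;> nlinarith
  · set a := p 0
    set c := p 2
    rintro ⟨hp, h₁, h₂, h₃, h₄⟩
    refine ⟨2 * c / L - a, a - c / L, ⟨?_, ?_⟩, ⟨?_, ?_⟩, ?_⟩
    · rw [sub_pos, lt_div_iff₀ hL]; linarith
    · rw [sub_lt_iff_lt_add, div_lt_iff₀ hL]; linarith
    · rw [sub_pos, div_lt_iff₀ hL]; linarith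
    · rw [sub_lt_comm, lt_div_iff₀ hL]; linarith
    · have hc : (2 * c / L - a + (a - c / L)) * L = c := by field_simp; ring
      rw [smul_add_smul_eq, hc, hp]
      ring_nf

lemma box_inequalities_iff {L a c : ℤ} (hL : 0 < L) :
    ((a - 1) * L < c ∧ c < a * L ∧ a * L < 2 * c ∧ 2 * c < (a + 1) * L) ↔
      (a = 1 ∧ L < 2 * c ∧ c < L) ∨ (a = 2 ∧ L < c ∧ 2 * c < 3 * L) := by
  constructor
  · rintro ⟨h₁, h₂, h₃, h₄⟩
    have ha : 0 < a ∧ a < 3 := ⟨by nlinarith, by nlinarith⟩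
    obtain rfl | rfl : a = 1 ∨ a = 2 := by omega
    · left; refine ⟨rfl, ?_, ?_⟩ <;> linarith
    · right; refine ⟨rfl, ?_, ?_⟩ <;> linarith
  · rintro (⟨rfl, h₁, h₂⟩ | ⟨rfl, h₁, h₂⟩) <;> refine ⟨?_, ?_, ?_, ?_⟩ <;> linarith

lemma intVec_mem_box2_iff {L : ℕ} (hL : 0 < L) (a c : ℤ) :
    ![(a : ℝ), -(c : ℝ), c] ∈ box2 ![1, -(L : ℝ), L] ![2, -(L : ℝ), L] ↔
      (a = 1 ∧ L < 2 * c ∧ c < L) ∨ (a = 2 ∧ L < c ∧ 2 * c < 3 * L) := by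
  rw [mem_box2_iff (by exact_mod_cast hL), ← box_inequalities_iff (by exact_mod_cast hL)]
  simp only [Matrix.cons_val_zero, Matrix.cons_val_two, Matrix.tail_cons, Matrix.head_cons,
    true_and]
  norm_cast

lemma isLatticePt_intVec (a c : ℤ) : IsLatticePt ![(a : ℝ), -(c : ℝ), c] := by
  intro i
  fin_cases i
  exacts [⟨a, rfl⟩, ⟨-c, by simp⟩, ⟨c, rfl⟩]

lemma natVec_injective (a : ℝ) : Function.Injective fun c : ℕ => ![a, -(c : ℝ), c] :=
  fun c c' h => by simpa using congrFun h 2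

lemma latticePts_box2 {L : ℕ} (hL : 0 < L) :
    {p | p ∈ box2 ![1, -(L : ℝ), L] ![2, -(L : ℝ), L] ∧ IsLatticePt p} =
      (fun c : ℕ => ![(1 : ℝ), -c, c]) '' {c | L < 2 * c ∧ c < L} ∪
        (fun c : ℕ => ![(2 : ℝ), -c, c]) '' {c | L < c ∧ 2 * c < 3 * L} := by
  ext p
  simp only [Set.mem_ofPred_eq, Set.mem_union, Set.mem_image]
  constructor
  · rintro ⟨hbox, hlat⟩
    obtain ⟨a, ha⟩ := hlat 0
    obtain ⟨c, hc⟩ := hlat 2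
    obtain rfl : p = ![(a : ℝ), -(c : ℝ), c] := by
      rw [← ha, ← hc]; exact ((mem_box2_iff (by exact_mod_cast hL)).1 hbox).1
    rw [intVec_mem_box2_iff hL] at hbox
    lift c to ℕ using by omega
    rcases hbox with ⟨rfl, h⟩ | ⟨rfl, h⟩
    · exact Or.inl ⟨c, by exact_mod_cast h, by simp⟩
    · exact Or.inr ⟨c, by exact_mod_cast h, by simp⟩
  · rintro (⟨c, hc, rfl⟩ | ⟨c, hc, rfl⟩)
    · have hbox := (intVec_mem_box2_iff hL 1 c).2 (by omega)
      exact ⟨by exact_mod_cast hbox, by exact_mod_cast isLatticePt_intVec 1 c⟩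
    · have hbox := (intVec_mem_box2_iff hL 2 c).2 (by omega)
      exact ⟨by exact_mod_cast hbox, by exact_mod_cast isLatticePt_intVec 2 c⟩

lemma setOf_eq_image_union {k L : ℕ} (hk : k < L) :
    {p | ∃ j : ℕ, 1 ≤ j ∧ j ≤ k ∧
        (p = ![(1 : ℝ), (j : ℝ) - (L : ℝ), (L : ℝ) - (j : ℝ)] ∨
         p = ![(2 : ℝ), -(L : ℝ) - (j : ℝ), (L : ℝ) + (j : ℝ)])} =
      (fun c : ℕ => ![(1 : ℝ), -c, c]) '' ↑(Finset.Icc (L - k) (L - 1)) ∪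
        (fun c : ℕ => ![(2 : ℝ), -c, c]) '' ↑(Finset.Icc (L + 1) (L + k)) := by
  ext p
  simp only [Set.mem_union, Set.mem_image, Finset.coe_Icc, Set.mem_Icc, Set.mem_ofPred_eq]
  constructor
  · rintro ⟨j, hj₁, hjk, rfl | rfl⟩
    · refine Or.inl ⟨L - j, by omega, ?_⟩
      rw [Nat.cast_sub (by omega)]; ring_nf
    · refine Or.inr ⟨L + j, by omega, ?_⟩
      push_cast; ring_nf
  · rintro (⟨c, hc, rfl⟩ | ⟨c, hc, rfl⟩)
    · refine ⟨L - c, by omega, by omega, Or.inl ?_⟩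
      rw [Nat.cast_sub (by omega)]; ring_nf
    · refine ⟨c - L, by omega, by omega, Or.inr ?_⟩
      rw [Nat.cast_sub (by omega)]; ring_nf

lemma finsum_image_union_eq_sum_add_sum {M : Type*} [AddCommMonoid M] (f : ℕ → M)
    (A B : Finset ℕ) :
    ∑ᶠ p ∈ (fun c : ℕ => ![(1 : ℝ), -c, c]) '' ↑A ∪ (fun c : ℕ => ![(2 : ℝ), -c, c]) '' ↑B,
        f ⌊p 2⌋.toNat = ∑ c ∈ A, f c + ∑ c ∈ B, f c := by
  have hdisj : Disjoint ((fun c : ℕ => ![(1 : ℝ), -c, c]) '' ↑A)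
      ((fun c : ℕ => ![(2 : ℝ), -c, c]) '' ↑B) := by
    rw [Set.disjoint_left]
    rintro _ ⟨c, -, rfl⟩ ⟨c', -, h⟩
    simpa using congrFun h 0
  rw [finsum_mem_union hdisj (Set.toFinite _) (Set.toFinite _),
    finsum_mem_image (natVec_injective 1).injOn, finsum_mem_image (natVec_injective 2).injOn,
    finsum_mem_coe_finset, finsum_mem_coe_finset]
  simp

end BoxF1

/-- Let `L = 2k+1` be an odd positive integer and `W = {(1,−L,L), (2,−L,L)} ⊂ ℤ³`.
Then the integer points of `box(W)` are exactly the points `(1, j−L, L−j)` for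
`j = 1, …, k` and `(2, −L−j, L+j)` for `j = 1, …, k`; consequently the box polynomial
is `B(W;z) = ∑_{i=L−k}^{L−1} z^i + ∑_{i=L+1}^{L+k} z^i`. -/
theorem box_polynomial_F1 (k L : ℕ) (hL : L = 2 * k + 1) :
    ({p | p ∈ box2 ![(1 : ℝ), -(L : ℝ), (L : ℝ)] ![(2 : ℝ), -(L : ℝ), (L : ℝ)] ∧
        IsLatticePt p}
      = {p | ∃ j : ℕ, 1 ≤ j ∧ j ≤ k ∧
          (p = ![(1 : ℝ), (j : ℝ) - (L : ℝ), (L : ℝ) - (j : ℝ)] ∨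
           p = ![(2 : ℝ), -(L : ℝ) - (j : ℝ), (L : ℝ) + (j : ℝ)])}) ∧
    (∑ᶠ p ∈ {p | p ∈ box2 ![(1 : ℝ), -(L : ℝ), (L : ℝ)] ![(2 : ℝ), -(L : ℝ), (L : ℝ)] ∧
          IsLatticePt p}, (Polynomial.X : Polynomial ℤ) ^ (⌊p 2⌋.toNat))
      = (∑ i ∈ Finset.Icc (L - k) (L - 1), Polynomial.X ^ i)
        + ∑ i ∈ Finset.Icc (L + 1) (L + k), Polynomial.X ^ i := by
  -- `L` odd: the bounds `L / 2` and `3L / 2` are `L - k - 1/2` and `L + k + 1/2`.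
  have hA : {c : ℕ | L < 2 * c ∧ c < L} = ↑(Finset.Icc (L - k) (L - 1)) := by
    ext; simp; omega
  have hB : {c : ℕ | L < c ∧ 2 * c < 3 * L} = ↑(Finset.Icc (L + 1) (L + k)) := by
    ext; simp; omega
  rw [BoxF1.latticePts_box2 (by omega), hA, hB, BoxF1.setOf_eq_image_union (by omega)]
  exact ⟨rfl, BoxF1.finsum_image_union_eq_sum_add_sum _ _ _⟩
end
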